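/- Let n ≥ 1 and let x₁, …, xₙ be points in a Euclidean space ℝᵏ. If D is the n×n matrix with Dᵢⱼ = ‖xᵢ − xⱼ‖₂², then −C D C is positive semidefinite and Dᵢᵢ = 0 for all i. -/

import Mathlib

/-!
For weights `w` with `∑ wᵢ = 0`, expanding `‖xᵢ - xⱼ‖² = ‖xᵢ‖² - 2⟪xᵢ, xⱼ⟫ + ‖xⱼ‖²` kills the
squared-norm terms, so `wᵀ D w = -2 ‖∑ wᵢ xᵢ‖² ≤ 0`. Since `C` is symmetric and `C z` always has
coordinate sum zero, `zᵀ (-C D C) z = -(C z)ᵀ D (C z) ≥ 0`.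
-/

open Matrix BigOperators

/-- Positive semidefiniteness: zᵀ M z ≥ 0 for all z ∈ ℝⁿ. -/
def PSD (n : ℕ) (M : Matrix (Fin n) (Fin n) ℝ) : Prop :=
  ∀ z : Fin n → ℝ, 0 ≤ z ⬝ᵥ (M *ᵥ z)

/-- The centering matrix C = Iₙ − (1/n)·𝟏𝟏ᵀ. -/
noncomputable def Cmat (n : ℕ) : Matrix (Fin n) (Fin n) ℝ :=
  1 - ((n : ℝ)⁻¹) • Matrix.vecMulVec (fun _ => 1) (fun _ => 1)

theorem transpose_Cmat (n : ℕ) : (Cmat n)ᵀ = Cmat n := by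
  simp [Cmat, transpose_smul, transpose_vecMulVec]

theorem sum_Cmat_mulVec (n : ℕ) (z : Fin n → ℝ) : ∑ i, (Cmat n *ᵥ z) i = 0 := by
  rcases Nat.eq_zero_or_pos n with rfl | hpos
  · simp
  have hn0 : (n : ℝ) ≠ 0 := by positivity
  simp [Cmat, sub_mulVec, smul_mulVec, vecMulVec_mulVec, Finset.sum_sub_distrib, hn0, dotProduct]

theorem dotProduct_transpose_mul_mul_mulVec {ι κ : Type*} [Fintype ι] [Fintype κ]
    (A : Matrix κ ι ℝ) (M : Matrix κ κ ℝ) (z : ι → ℝ) :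
    z ⬝ᵥ ((Aᵀ * M * A) *ᵥ z) = (A *ᵥ z) ⬝ᵥ (M *ᵥ (A *ᵥ z)) := by
  rw [← mulVec_mulVec, ← mulVec_mulVec, dotProduct_mulVec, vecMul_transpose]

theorem dotProduct_mulVec_eq_sum {ι : Type*} [Fintype ι] (M : Matrix ι ι ℝ) (w : ι → ℝ) :
    w ⬝ᵥ (M *ᵥ w) = ∑ i, ∑ j, w i * w j * M i j := by
  simp only [dotProduct, mulVec, Finset.mul_sum]
  exact Finset.sum_congr rfl fun i _ => Finset.sum_congr rfl fun j _ => by ring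

theorem sum_sum_mul_norm_sub_sq_of_sum_eq_zero {ι E : Type*} [Fintype ι]
    [NormedAddCommGroup E] [InnerProductSpace ℝ E] (x : ι → E) {w : ι → ℝ} (hw : ∑ i, w i = 0) :
    ∑ i, ∑ j, w i * w j * ‖x i - x j‖ ^ 2 = -2 * ‖∑ i, w i • x i‖ ^ 2 := by
  have hexpand : ∀ i j, w i * w j * ‖x i - x j‖ ^ 2 =
      w j * (w i * ‖x i‖ ^ 2) + w i * (w j * ‖x j‖ ^ 2) - 2 * inner ℝ (w i • x i) (w j • x j) := by
    intro i j
    rw [norm_sub_sq_real, real_inner_smul_left, real_inner_smul_right]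
    ring
  simp only [hexpand, Finset.sum_sub_distrib, Finset.sum_add_distrib, ← Finset.sum_mul,
    ← Finset.mul_sum, hw, ← sum_inner, ← inner_sum, real_inner_self_eq_norm_sq]
  ring

theorem edm_neg_CDC_psd_general (n : ℕ) (k : ℕ)
    (x : Fin n → EuclideanSpace ℝ (Fin k))
    (D : Matrix (Fin n) (Fin n) ℝ)
    (hD : ∀ i j, D i j = ‖x i - x j‖ ^ 2) :
    PSD n (-(Cmat n * D * Cmat n)) ∧ ∀ i, D i i = 0 := by
  refine ⟨fun z => ?_, fun i => by simp [hD]⟩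
  have hcentre := dotProduct_transpose_mul_mul_mulVec (Cmat n) D z
  rw [transpose_Cmat] at hcentre
  rw [neg_mulVec, dotProduct_neg, hcentre, dotProduct_mulVec_eq_sum]
  simp only [hD, sum_sum_mul_norm_sub_sq_of_sum_eq_zero x (sum_Cmat_mulVec n z)]
  linarith [sq_nonneg ‖∑ i, (Cmat n *ᵥ z) i • x i‖]

/-- Forward direction of Theorem 2 of the paper: the Euclidean distance
    matrix of a set of points has −C D C ⪰ 0 and zero diagonal. -/
theorem edm_neg_CDC_psd (n : ℕ) (hn : 1 ≤ n) (k : ℕ)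
    (x : Fin n → EuclideanSpace ℝ (Fin k))
    (D : Matrix (Fin n) (Fin n) ℝ)
    (hD : ∀ i j, D i j = ‖x i - x j‖ ^ 2) :
    PSD n (-(Cmat n * D * Cmat n)) ∧ ∀ i, D i i = 0 :=
  edm_neg_CDC_psd_general n k x D hD
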